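/- For every x ∈ ℝ there exists c₀ > 0 such that the map c ↦ V^c(x) is differentiable on (0, c₀), and lim_{c → 0⁺} √c · (d/dc)V^c(x) = −σ√α/(√6 ρ); in particular (d/dc)V^c(x) → −∞ as c → 0⁺. -/

import Mathlib

/-- `h_A(y) = A θ e^{θ y} − A θ e^{−θ y} − 2 k₂ y`. -/
noncomputable def hFun (θ k₂ A y : ℝ) : ℝ :=
  A * θ * Real.exp (θ * y) - A * θ * Real.exp (-(θ * y)) - 2 * k₂ * y

/-- `g(A) = −A e^{θ ȳ(A)} − A e^{−θ ȳ(A)} + k₂ ȳ(A)² + 2A`. -/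
noncomputable def gFun (θ k₂ : ℝ) (ybar : ℝ → ℝ) (A : ℝ) : ℝ :=
  -A * Real.exp (θ * ybar A) - A * Real.exp (-(θ * ybar A)) + k₂ * (ybar A) ^ 2 + 2 * A

/-- `φ_A(x) = A e^{θ(x−x_v)} + A e^{−θ(x−x_v)} − k₂ (x−x_v)² + k₀`. -/
noncomputable def phiFun (θ k₂ k₀ xv A x : ℝ) : ℝ :=
  A * Real.exp (θ * (x - xv)) + A * Real.exp (-(θ * (x - xv))) - k₂ * (x - xv) ^ 2 + k₀

/-- `V^c(x) = φ_{A(c)}(x)` on `(x_v − ȳ(c), x_v + ȳ(c))`, and `φ_{A(c)}(x_v) − c` otherwise. -/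
noncomputable def VFun (θ k₂ k₀ xv : ℝ) (Ac ybc : ℝ → ℝ) (c x : ℝ) : ℝ :=
  if xv - ybc c < x ∧ x < xv + ybc c then phiFun θ k₂ k₀ xv (Ac c) x
  else phiFun θ k₂ k₀ xv (Ac c) xv - c

/-!
Put `u = θ ȳ / 2` and `κ = k₂ / θ²`. The equation `h_A(ȳ) = 0` says `A = κ u / (sinh u cosh u)`,
and then `g(A) = c` says `c = 4 κ (u² - u tanh u)`. The right-hand side is strictly increasing in
`u`, so `u` is a differentiable function of `c` tending to `0` as `c → 0⁺`, and the two
parametrisations combine to `dA/dc = -1 / (4 sinh² u)`. Near `c = 0` the point `x` is either the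
centre `x_v` (always inside the band) or outside the band, so `V^c(x) = 2 A(c) + k₀ - e c` with
`e ∈ {0, 1}`. Since `c ~ 4 κ u⁴ / 3` and `sinh u ~ u`, we get `√c · dV/dc → -√κ / √3`.
-/

open Real Filter Set Topology

theorem strictMonoOn_Ici_of_hasDerivAt_pos {f f' : ℝ → ℝ} {a : ℝ}
    (hf : ∀ x, HasDerivAt f (f' x) x) (hf' : ∀ x, a < x → 0 < f' x) :
    StrictMonoOn f (Ici a) :=
  strictMonoOn_of_hasDerivWithinAt_pos (convex_Ici a)
    (fun x _ => (hf x).continuousAt.continuousWithinAt) (fun x _ => (hf x).hasDerivWithinAt)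
    (fun x hx => hf' x (by rwa [interior_Ici] at hx))

namespace Real

theorem hasDerivAt_tanh (x : ℝ) : HasDerivAt tanh (1 - tanh x ^ 2) x := by
  have h := (hasDerivAt_sinh x).div (hasDerivAt_cosh x) (cosh_pos x).ne'
  rw [show sinh / cosh = tanh from funext fun y => (tanh_eq_sinh_div_cosh y).symm] at h
  refine h.congr_deriv ?_
  rw [tanh_eq_sinh_div_cosh]
  field_simp

theorem tanh_pos {x : ℝ} (hx : 0 < x) : 0 < tanh x := by
  rw [tanh_eq_sinh_div_cosh]
  exact div_pos (sinh_pos_iff.2 hx) (cosh_pos x)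

theorem tanh_lt_self {x : ℝ} (hx : 0 < x) : tanh x < x := by
  have hmono : StrictMonoOn (fun x => x - tanh x) (Ici 0) :=
    strictMonoOn_Ici_of_hasDerivAt_pos (fun y => (hasDerivAt_id y).sub (hasDerivAt_tanh y))
      fun y hy => by simpa using pow_pos (tanh_pos hy) 2
  simpa using hmono self_mem_Ici hx.le hx

theorem tendsto_sinh_div_self : Tendsto (fun x => sinh x / x) (𝓝[≠] 0) (𝓝 1) := by
  refine (cosh_zero ▸ hasDerivAt_iff_tendsto_slope.1 (hasDerivAt_sinh 0)).congr fun x => ?_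
  simp [slope_def_field]

theorem tendsto_mul_cosh_sub_sinh_div_pow_three :
    Tendsto (fun x => (x * cosh x - sinh x) / x ^ 3) (𝓝[>] 0) (𝓝 (1 / 3)) := by
  refine HasDerivAt.lhopital_zero_nhdsGT (f' := fun x => x * sinh x) (g' := fun x => 3 * x ^ 2)
    (.of_forall fun x => ?_) (.of_forall fun x => by simpa using hasDerivAt_pow 3 x) ?_ ?_ ?_ ?_
  · exact (((hasDerivAt_id x).mul (hasDerivAt_cosh x)).sub (hasDerivAt_sinh x)).congr_deriv
      (by simp)
  · filter_upwards [self_mem_nhdsWithin] with x (hx : 0 < x) using by positivity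
  · exact ((continuous_id.mul continuous_cosh).sub continuous_sinh).tendsto' 0 0
      (by simp) |>.mono_left nhdsWithin_le_nhds
  · exact (continuous_pow 3).tendsto' 0 0 (by simp) |>.mono_left nhdsWithin_le_nhds
  · refine ((tendsto_sinh_div_self.mono_left (nhdsGT_le_nhdsNE 0)).div_const 3).congr' ?_
    filter_upwards [self_mem_nhdsWithin] with x (hx : 0 < x)
    field_simp

end Real

section RightInverse

variable {F s : ℝ → ℝ} (hF : StrictMonoOn F (Ici 0)) (hs : MapsTo s (Ioi 0) (Ioi 0))
  (hFs : RightInvOn s F (Ioi 0))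
include hF hs hFs

theorem lt_iff_lt_of_rightInvOn {c y : ℝ} (hc : 0 < c) (hy : 0 ≤ y) : s c < y ↔ c < F y := by
  conv_rhs => rw [← hFs hc]
  exact (hF.lt_iff_lt (Ioi_subset_Ici_self (hs hc)) hy).symm

theorem tendsto_nhdsGT_of_rightInvOn (hF0 : F 0 = 0) : Tendsto s (𝓝[>] 0) (𝓝[>] 0) := by
  refine tendsto_nhdsWithin_iff.2 ⟨tendsto_order.2 ⟨fun a ha => ?_, fun b hb => ?_⟩,
    eventually_nhdsWithin_of_forall hs⟩
  · filter_upwards [self_mem_nhdsWithin] with c hc using ha.trans (hs hc)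
  · have hFb : 0 < F b := hF0 ▸ hF self_mem_Ici hb.le hb
    filter_upwards [Ioo_mem_nhdsGT hFb] with c hc
    exact (lt_iff_lt_of_rightInvOn hF hs hFs hc.1 hb.le).2 hc.2

theorem hasDerivAt_of_rightInvOn (hF0 : F 0 = 0) {c f' : ℝ} (hc : 0 < c)
    (hF' : HasDerivAt F f' (s c)) (hf' : f' ≠ 0) : HasDerivAt s f'⁻¹ c := by
  have hFpos : ∀ y, 0 < y → 0 < F y := fun y hy => hF0 ▸ hF self_mem_Ici hy.le hy
  have hsF : ∀ y, 0 < y → s (F y) = y := fun y hy =>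
    hF.injOn (Ioi_subset_Ici_self (hs (hFpos y hy))) hy.le (hFs (hFpos y hy))
  have hmono : StrictMonoOn s (Ioi 0) := fun a ha b hb hab =>
    (lt_iff_lt_of_rightInvOn hF hs hFs ha (le_of_lt (hs hb))).2 (by rwa [hFs hb])
  have hcont : ContinuousAt s c := hmono.continuousAt_of_image_mem_nhds (Ioi_mem_nhds hc) <|
    mem_of_superset (Ioi_mem_nhds (hs hc)) fun y (hy : 0 < y) =>
      ⟨F y, hFpos y hy, hsF y hy⟩
  exact hF'.of_local_left_inverse hcont hf' (eventually_of_mem (Ioi_mem_nhds hc) hFs)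

end RightInverse

theorem tendsto_sqrt_nhdsGT_zero : Tendsto (√·) (𝓝[>] 0) (𝓝[>] 0) :=
  tendsto_nhdsWithin_iff.2
    ⟨(continuous_sqrt.tendsto' 0 0 sqrt_zero).mono_left nhdsWithin_le_nhds,
      eventually_nhdsWithin_of_forall fun _ hc => sqrt_pos.2 hc⟩

theorem tendsto_atBot_of_tendsto_sqrt_mul {f : ℝ → ℝ} {L : ℝ} (hL : L < 0)
    (h : Tendsto (fun c => √c * f c) (𝓝[>] 0) (𝓝 L)) : Tendsto f (𝓝[>] 0) atBot := by
  refine ((tendsto_inv_nhdsGT_zero.comp tendsto_sqrt_nhdsGT_zero).atTop_mul_neg hL h).congr' ?_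
  filter_upwards [self_mem_nhdsWithin] with c (hc : 0 < c)
  simp [(sqrt_pos.2 hc).ne']

theorem exists_differentiableAt_and_tendsto_sqrt_mul_deriv {V A A' : ℝ → ℝ} {k e L : ℝ}
    (hA : ∀ c, 0 < c → HasDerivAt A (A' c) c)
    (hA' : Tendsto (fun c => √c * A' c) (𝓝[>] 0) (𝓝 L))
    (hV : ∀ᶠ c in 𝓝[>] 0, V c = 2 * A c + k - e * c) :
    ∃ c₀, 0 < c₀ ∧ (∀ c ∈ Ioo 0 c₀, DifferentiableAt ℝ V c) ∧
      Tendsto (fun c => √c * deriv V c) (𝓝[>] 0) (𝓝 (2 * L)) := by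
  obtain ⟨c₀, hc₀, hV⟩ := (nhdsGT_basis 0).eventually_iff.1 hV
  have hderiv : ∀ c ∈ Ioo 0 c₀, HasDerivAt V (2 * A' c - e) c := fun c hc =>
    ((((hA c hc.1).const_mul 2).add_const k).sub ((hasDerivAt_id c).const_mul e)).congr_deriv
      (by simp) |>.congr_of_eventuallyEq (eventually_of_mem (Ioo_mem_nhds hc.1 hc.2) hV)
  refine ⟨c₀, hc₀, fun c hc => (hderiv c hc).differentiableAt, ?_⟩
  have := (hA'.const_mul 2).sub
    ((tendsto_sqrt_nhdsGT_zero.mono_right nhdsWithin_le_nhds).mul_const e)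
  rw [zero_mul, sub_zero] at this
  refine this.congr' ?_
  filter_upwards [Ioo_mem_nhdsGT hc₀] with c hc
  rw [(hderiv c hc).deriv]
  ring

noncomputable def costProfile (u : ℝ) : ℝ := u ^ 2 - u * tanh u

noncomputable def coefProfile (u : ℝ) : ℝ := u / (sinh u * cosh u)

theorem hasDerivAt_costProfile (u : ℝ) :
    HasDerivAt costProfile (u - tanh u + u * tanh u ^ 2) u :=
  (((hasDerivAt_pow 2 u).sub ((hasDerivAt_id u).mul (hasDerivAt_tanh u)))).congr_deriv
    (by simp; ring)

theorem costProfile_deriv_pos {u : ℝ} (hu : 0 < u) : 0 < u - tanh u + u * tanh u ^ 2 := by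
  have := tanh_lt_self hu
  positivity

theorem hasDerivAt_coefProfile {u : ℝ} (hu : u ≠ 0) :
    HasDerivAt coefProfile (-(u - tanh u + u * tanh u ^ 2) / sinh u ^ 2) u := by
  have hs : sinh u ≠ 0 := sinh_ne_zero.2 hu
  have hc : cosh u ≠ 0 := (cosh_pos u).ne'
  refine ((hasDerivAt_id u).div ((hasDerivAt_sinh u).mul (hasDerivAt_cosh u))
    (mul_ne_zero hs hc)).congr_deriv ?_
  simp only [Pi.mul_apply, id_eq]
  rw [tanh_eq_sinh_div_cosh]
  field_simp
  ring

theorem tendsto_costProfile_div_pow_four :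
    Tendsto (fun u => costProfile u / u ^ 4) (𝓝[>] 0) (𝓝 (1 / 3)) := by
  have hcosh : Tendsto cosh (𝓝[>] 0) (𝓝 1) :=
    cosh_zero ▸ continuous_cosh.continuousAt.tendsto.mono_left nhdsWithin_le_nhds
  refine (div_one (1 / 3 : ℝ) ▸
    tendsto_mul_cosh_sub_sinh_div_pow_three.div hcosh one_ne_zero).congr' ?_
  filter_upwards [self_mem_nhdsWithin] with u (hu : 0 < u)
  rw [Pi.div_apply, costProfile, tanh_eq_sinh_div_cosh]
  field_simp

theorem tendsto_sqrt_costProfile_div_sinh_sq :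
    Tendsto (fun u => √(costProfile u) / sinh u ^ 2) (𝓝[>] 0) (𝓝 (√3)⁻¹) := by
  have hsinh := (tendsto_sinh_div_self.mono_left (nhdsGT_le_nhdsNE 0)).pow 2
  have := (tendsto_costProfile_div_pow_four.sqrt).div hsinh (by norm_num)
  rw [one_pow, div_one, one_div, sqrt_inv] at this
  refine this.congr' ?_
  filter_upwards [self_mem_nhdsWithin] with u (hu : 0 < u)
  rw [Pi.div_apply, sqrt_div' _ (by positivity), show u ^ 4 = (u ^ 2) ^ 2 by ring,
    sqrt_sq (by positivity)]
  field_simp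

theorem hFun_eq (θ k₂ A y : ℝ) : hFun θ k₂ A y = 2 * A * θ * sinh (θ * y) - 2 * k₂ * y := by
  rw [hFun, sinh_eq]; ring

theorem gFun_eq (θ k₂ A : ℝ) (ybar : ℝ → ℝ) :
    gFun θ k₂ ybar A = k₂ * ybar A ^ 2 - 2 * A * (cosh (θ * ybar A) - 1) := by
  rw [gFun, cosh_eq]; ring

theorem eq_coefProfile_of_hFun_eq_zero {θ k₂ A y : ℝ} (hθ : θ ≠ 0) (hy : y ≠ 0)
    (h : hFun θ k₂ A y = 0) : A = k₂ / θ ^ 2 * coefProfile (θ / 2 * y) := by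
  rw [hFun_eq, show θ * y = 2 * (θ / 2 * y) by ring, sinh_two_mul] at h
  rw [coefProfile]
  generalize hu : θ / 2 * y = u at *
  have hs : sinh u ≠ 0 := sinh_ne_zero.2 (by rw [← hu]; positivity)
  have hc : cosh u ≠ 0 := (cosh_pos _).ne'
  rw [show y = 2 * u / θ by rw [← hu]; field_simp] at h
  field_simp at h ⊢
  linear_combination h / 4

theorem gFun_eq_costProfile {θ k₂ A : ℝ} {ybar : ℝ → ℝ} (hθ : θ ≠ 0) (hy : ybar A ≠ 0)
    (h : hFun θ k₂ A (ybar A) = 0) :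
    gFun θ k₂ ybar A = 4 * (k₂ / θ ^ 2) * costProfile (θ / 2 * ybar A) := by
  rw [gFun_eq]
  generalize ybar A = y at *
  rw [eq_coefProfile_of_hFun_eq_zero hθ hy h, costProfile, coefProfile, tanh_eq_sinh_div_cosh,
    show θ * y = 2 * (θ / 2 * y) by ring, cosh_two_mul]
  generalize hu : θ / 2 * y = u
  have hs : sinh u ≠ 0 := sinh_ne_zero.2 (by rw [← hu]; positivity)
  have hc : cosh u ≠ 0 := (cosh_pos _).ne'
  rw [show y = 2 * u / θ by rw [← hu]; field_simp]
  field_simp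
  linear_combination -2 * k₂ * u * cosh_sq u

theorem hasDerivAt_const_mul_costProfile_mul (κ r y : ℝ) :
    HasDerivAt (fun y => 4 * κ * costProfile (r * y))
      (4 * κ * r * (r * y - tanh (r * y) + r * y * tanh (r * y) ^ 2)) y :=
  (((hasDerivAt_costProfile (r * y)).comp y ((hasDerivAt_id y).const_mul r)).const_mul
    (4 * κ)).congr_deriv (by simp; ring)

section Profile

variable {κ r : ℝ}

theorem strictMonoOn_const_mul_costProfile_mul (hκ : 0 < κ) (hr : 0 < r) :
    StrictMonoOn (fun y => 4 * κ * costProfile (r * y)) (Ici 0) :=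
  strictMonoOn_Ici_of_hasDerivAt_pos (hasDerivAt_const_mul_costProfile_mul κ r) fun y hy =>
    have := costProfile_deriv_pos (mul_pos hr hy)
    by positivity

variable {s A : ℝ → ℝ} (hκ : 0 < κ) (hr : 0 < r) (hs : MapsTo s (Ioi 0) (Ioi 0))
  (hcost : RightInvOn s (fun y => 4 * κ * costProfile (r * y)) (Ioi 0))
include hκ hr hs hcost

theorem tendsto_nhdsGT_of_rightInvOn_costProfile : Tendsto s (𝓝[>] 0) (𝓝[>] 0) :=
  tendsto_nhdsGT_of_rightInvOn (strictMonoOn_const_mul_costProfile_mul hκ hr) hs hcost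
    (by simp [costProfile])

theorem hasDerivAt_of_rightInvOn_costProfile (hA : ∀ c, 0 < c → A c = κ * coefProfile (r * s c))
    {c : ℝ} (hc : 0 < c) : HasDerivAt A (-(4 * sinh (r * s c) ^ 2)⁻¹) c := by
  have hv : 0 < r * s c := mul_pos hr (hs hc)
  have hs' := hasDerivAt_of_rightInvOn (strictMonoOn_const_mul_costProfile_mul hκ hr) hs hcost
    (by simp [costProfile]) hc (hasDerivAt_const_mul_costProfile_mul κ r (s c))
    (have := costProfile_deriv_pos hv; by positivity)
  have hR := ((hasDerivAt_coefProfile hv.ne').comp c (hs'.const_mul r)).const_mul κ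
  refine (hR.congr_deriv ?_).congr_of_eventuallyEq ?_
  · have := costProfile_deriv_pos hv
    have : sinh (r * s c) ≠ 0 := (sinh_pos_iff.2 hv).ne'
    field_simp
  · filter_upwards [Ioi_mem_nhds hc] with c' hc' using hA c' hc'

theorem tendsto_sqrt_mul_of_rightInvOn_costProfile :
    Tendsto (fun c => √c * -(4 * sinh (r * s c) ^ 2)⁻¹) (𝓝[>] 0) (𝓝 (-(√κ / (2 * √3)))) := by
  have hu : Tendsto (fun c => r * s c) (𝓝[>] 0) (𝓝[>] 0) :=
    (tendsto_iff_comap.2 (comap_mulLeft_nhdsGT_zero hr).ge).comp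
      (tendsto_nhdsGT_of_rightInvOn_costProfile hκ hr hs hcost)
  have := (tendsto_sqrt_costProfile_div_sinh_sq.comp hu).const_mul (-(√κ / 2))
  rw [show -(√κ / 2) * (√3)⁻¹ = -(√κ / (2 * √3)) by field_simp] at this
  refine this.congr' ?_
  filter_upwards [self_mem_nhdsWithin] with c (hc : 0 < c)
  have hsinh : sinh (r * s c) ≠ 0 := (sinh_pos_iff.2 (mul_pos hr (hs hc))).ne'
  have hsqrt : √c = 2 * √κ * √(costProfile (r * s c)) := by
    conv_lhs => rw [← hcost hc]
    rw [sqrt_mul (by positivity), sqrt_mul (by norm_num), show (4 : ℝ) = 2 ^ 2 by norm_num,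
      sqrt_sq zero_le_two]
  rw [Function.comp_apply, hsqrt]
  field_simp
  ring

end Profile

theorem phiFun_self (θ k₂ k₀ xv A : ℝ) : phiFun θ k₂ k₀ xv A xv = 2 * A + k₀ := by
  simp [phiFun]; ring

theorem VFun_of_abs_sub_lt {θ k₂ k₀ xv c x : ℝ} {Ac ybc : ℝ → ℝ} (h : |x - xv| < ybc c) :
    VFun θ k₂ k₀ xv Ac ybc c x = phiFun θ k₂ k₀ xv (Ac c) x := by
  rw [VFun, if_pos]
  constructor <;> linarith [abs_lt.1 h]

theorem VFun_of_le_abs_sub {θ k₂ k₀ xv c x : ℝ} {Ac ybc : ℝ → ℝ} (h : ybc c ≤ |x - xv|) :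
    VFun θ k₂ k₀ xv Ac ybc c x = phiFun θ k₂ k₀ xv (Ac c) xv - c := by
  rw [VFun, if_neg]
  rintro ⟨h₁, h₂⟩
  exact h.not_gt (abs_sub_lt_iff.2 ⟨by linarith, by linarith⟩)

theorem exists_eventually_VFun_eq (θ k₂ k₀ xv x : ℝ) {Ac ybc : ℝ → ℝ}
    (h : Tendsto ybc (𝓝[>] 0) (𝓝[>] 0)) :
    ∃ e : ℝ, ∀ᶠ c in 𝓝[>] 0, VFun θ k₂ k₀ xv Ac ybc c x = 2 * Ac c + k₀ - e * c := by
  by_cases hx : x = xv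
  · refine ⟨0, ?_⟩
    filter_upwards [h self_mem_nhdsWithin] with c (hc : 0 < ybc c)
    rw [VFun_of_abs_sub_lt (by simpa [hx] using hc), hx, phiFun_self]
    ring
  · refine ⟨1, ?_⟩
    have hd : 0 < |x - xv| := abs_pos.2 (sub_ne_zero.2 hx)
    filter_upwards [(h.mono_right nhdsWithin_le_nhds).eventually (gt_mem_nhds hd)] with c hc
    rw [VFun_of_le_abs_sub hc.le, phiFun_self]
    ring

theorem sqrt_div_sq_div_sqrt_three {ρ σ α : ℝ} (hρ : 0 < ρ) (hσ : 0 < σ) :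
    √(α / ρ / (√(2 * ρ) / σ) ^ 2) / √3 = σ * √α / (√6 * ρ) := by
  have h : α / ρ / (√(2 * ρ) / σ) ^ 2 = α * (σ / ρ) ^ 2 / 2 := by
    rw [div_pow, sq_sqrt (by positivity)]
    field_simp
  rw [h, sqrt_div' _ zero_le_two, sqrt_mul' _ (sq_nonneg _), sqrt_sq (div_pos hσ hρ).le,
    show (6 : ℝ) = 2 * 3 by norm_num, sqrt_mul zero_le_two]
  field_simp

theorem stmt_16_general (ρ σ θ k₂ k₀ α xv : ℝ)
    (hρ : 0 < ρ) (hσ : 0 < σ)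
    (hθ : θ = Real.sqrt (2 * ρ) / σ)
    (hk₂ : k₂ = α / ρ)
    (ybarA : ℝ → ℝ)
    (hybarA : ∀ A : ℝ, 0 < A → A < k₂ / θ ^ 2 →
      0 < ybarA A ∧ hFun θ k₂ A (ybarA A) = 0)
    (Ac : ℝ → ℝ)
    (hAc : ∀ c : ℝ, 0 < c →
      0 < Ac c ∧ Ac c < k₂ / θ ^ 2 ∧ gFun θ k₂ ybarA (Ac c) = c) :
    ∀ x : ℝ, ∃ c₀ : ℝ, 0 < c₀ ∧
      (∀ c ∈ Set.Ioo (0 : ℝ) c₀,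
        DifferentiableAt ℝ (fun c => VFun θ k₂ k₀ xv Ac (fun c => ybarA (Ac c)) c x) c) ∧
      Filter.Tendsto
        (fun c => Real.sqrt c *
          deriv (fun c => VFun θ k₂ k₀ xv Ac (fun c => ybarA (Ac c)) c x) c)
        (nhdsWithin 0 (Set.Ioi 0))
        (nhds (-(σ * Real.sqrt α) / (Real.sqrt 6 * ρ))) ∧
      Filter.Tendsto
        (fun c => deriv (fun c => VFun θ k₂ k₀ xv Ac (fun c => ybarA (Ac c)) c x) c)
        (nhdsWithin 0 (Set.Ioi 0)) Filter.atBot := by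
  intro x
  have hθ0 : 0 < θ := hθ ▸ div_pos (sqrt_pos.2 (by positivity)) hσ
  have hκ : 0 < k₂ / θ ^ 2 := (hAc 1 one_pos).1.trans (hAc 1 one_pos).2.1
  have hybar : ∀ c, 0 < c → 0 < ybarA (Ac c) ∧ hFun θ k₂ (Ac c) (ybarA (Ac c)) = 0 :=
    fun c hc => hybarA _ (hAc c hc).1 (hAc c hc).2.1
  have hs : MapsTo (fun c => ybarA (Ac c)) (Ioi 0) (Ioi 0) := fun c hc => (hybar c hc).1
  have hcost : RightInvOn (fun c => ybarA (Ac c))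
      (fun y => 4 * (k₂ / θ ^ 2) * costProfile (θ / 2 * y)) (Ioi 0) := fun c hc =>
    (gFun_eq_costProfile hθ0.ne' (hybar c hc).1.ne' (hybar c hc).2).symm.trans (hAc c hc).2.2
  have hA : ∀ c, 0 < c → Ac c = k₂ / θ ^ 2 * coefProfile (θ / 2 * ybarA (Ac c)) := fun c hc =>
    eq_coefProfile_of_hFun_eq_zero hθ0.ne' (hybar c hc).1.ne' (hybar c hc).2
  obtain ⟨e, he⟩ := exists_eventually_VFun_eq θ k₂ k₀ xv x
    (tendsto_nhdsGT_of_rightInvOn_costProfile hκ (half_pos hθ0) hs hcost)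
  obtain ⟨c₀, hc₀, hdiff, hlim⟩ := exists_differentiableAt_and_tendsto_sqrt_mul_deriv
    (fun c hc => hasDerivAt_of_rightInvOn_costProfile hκ (half_pos hθ0) hs hcost hA hc)
    (tendsto_sqrt_mul_of_rightInvOn_costProfile hκ (half_pos hθ0) hs hcost) he
  have hval : 2 * -(√(k₂ / θ ^ 2) / (2 * √3)) = -(σ * √α) / (√6 * ρ) := by
    rw [hθ, hk₂, neg_div, ← sqrt_div_sq_div_sqrt_three hρ hσ]
    ring
  have hneg : 2 * -(√(k₂ / θ ^ 2) / (2 * √3)) < 0 :=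
    mul_neg_of_pos_of_neg two_pos (neg_lt_zero.2 (div_pos (sqrt_pos.2 hκ) (by positivity)))
  exact ⟨c₀, hc₀, hdiff, hval ▸ hlim, tendsto_atBot_of_tendsto_sqrt_mul hneg hlim⟩

theorem stmt_16 (ρ σ Δ b θ k₂ k₀ α xv yv : ℝ)
    (hρ : 0 < ρ) (hσ : 0 < σ) (hΔ : 0 < Δ) (hb : 0 ≤ b)
    (hθ : θ = Real.sqrt (2 * ρ) / σ)
    (hα : α = (Δ + b) / Δ ^ 2)
    (hxv : xv = Δ * (Δ + 2 * b) / (2 * (Δ + b)))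
    (hyv : yv = Δ ^ 2 / (4 * (Δ + b)))
    (hk₂ : k₂ = α / ρ)
    (hk₀ : k₀ = yv / ρ - 2 * k₂ / θ ^ 2)
    (ybarA : ℝ → ℝ)
    (hybarA : ∀ A : ℝ, 0 < A → A < k₂ / θ ^ 2 →
      0 < ybarA A ∧ hFun θ k₂ A (ybarA A) = 0)
    (Ac : ℝ → ℝ)
    (hAc : ∀ c : ℝ, 0 < c →
      0 < Ac c ∧ Ac c < k₂ / θ ^ 2 ∧ gFun θ k₂ ybarA (Ac c) = c) :
    ∀ x : ℝ, ∃ c₀ : ℝ, 0 < c₀ ∧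
      (∀ c ∈ Set.Ioo (0 : ℝ) c₀,
        DifferentiableAt ℝ (fun c => VFun θ k₂ k₀ xv Ac (fun c => ybarA (Ac c)) c x) c) ∧
      Filter.Tendsto
        (fun c => Real.sqrt c *
          deriv (fun c => VFun θ k₂ k₀ xv Ac (fun c => ybarA (Ac c)) c x) c)
        (nhdsWithin 0 (Set.Ioi 0))
        (nhds (-(σ * Real.sqrt α) / (Real.sqrt 6 * ρ))) ∧
      Filter.Tendsto
        (fun c => deriv (fun c => VFun θ k₂ k₀ xv Ac (fun c => ybarA (Ac c)) c x) c)
        (nhdsWithin 0 (Set.Ioi 0)) Filter.atBot :=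
  stmt_16_general ρ σ θ k₂ k₀ α xv hρ hσ hθ hk₂ ybarA hybarA Ac hAc
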